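/- arXiv:2001.03377 — 4 statements merged into one kernel-verified Lean document; each statement's English description precedes it below -/
import Mathlib

section
/- Let d ≥ 1 be a natural number and let a, b be real numbers with d/2 < a ≤ b < d. Then there exist constants 0 < c ≤ C such that for every s ∈ [a, b] and every real t ≥ 0 one has c·(1 + t^(2s−d)) ≤ Γ(s + t)/Γ(d − s + t) ≤ C·(1 + t^(2s−d)). -/
/-!
Write `x = d - s + t` and `l = 2s - d ∈ (0, d)`, so that the quotient is `Γ(x + l) / Γ(x)`.
Log-convexity of `Γ` between `x` and `x + d`, together with `Γ(x + d) ≤ Γ(x) (x + d)^d`, gives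
`Γ(x + l) ≤ Γ(x) (x + d)^l`; the same bound for the step `d - l` from `x + l` to `x + d`, together
with `Γ(x + d) ≥ Γ(x) x^d`, gives the matching lower bound `Γ(x + l) ≥ Γ(x) x^d / (x + l + d)^(d-l)`.
Since `x` and `x + l + d` are both comparable to `1 + t`, uniformly in `s ∈ [a, b]`, the quotient is
comparable to `(1 + t)^l`, hence to `1 + t^l`.
-/

open Real

namespace Real

theorem Gamma_mul_pow_le_Gamma_add_nat {x : ℝ} (hx : 0 < x) (n : ℕ) :
    Gamma x * x ^ n ≤ Gamma (x + n) := by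
  induction n with
  | zero => simp
  | succ n ih =>
    have hxn : 0 < x + n := by positivity
    rw [Nat.cast_succ, ← add_assoc, Gamma_add_one hxn.ne', pow_succ, ← mul_assoc]
    calc Gamma x * x ^ n * x ≤ Gamma (x + n) * (x + n) := by
          gcongr
          linarith [n.cast_nonneg (α := ℝ)]
      _ = (x + n) * Gamma (x + n) := mul_comm _ _

theorem Gamma_add_nat_le_Gamma_mul_pow {x : ℝ} (hx : 0 < x) (n : ℕ) :
    Gamma (x + n) ≤ Gamma x * (x + n) ^ n := by
  induction n with
  | zero => simp
  | succ n ih =>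
    have hxn : 0 < x + n := by positivity
    rw [Nat.cast_succ, ← add_assoc, Gamma_add_one hxn.ne', pow_succ]
    calc (x + n) * Gamma (x + n) ≤ (x + n) * (Gamma x * (x + n) ^ n) := by gcongr
      _ ≤ (x + n + 1) * (Gamma x * (x + n + 1) ^ n) := by
          have := (Gamma_pos_of_pos hx).le
          gcongr (?_ : ℝ) * (_ * ?_ ^ n) <;> linarith
      _ = Gamma x * ((x + n + 1) ^ n * (x + n + 1)) := by ring

theorem Gamma_add_le_Gamma_mul_rpow {x l : ℝ} {n : ℕ} (hx : 0 < x) (hl : 0 < l) (hln : l < n) :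
    Gamma (x + l) ≤ Gamma x * (x + n) ^ l := by
  have hn : (0 : ℝ) < n := hl.trans hln
  have hxn : 0 < x + n := by positivity
  have hΓx := Gamma_pos_of_pos hx
  set α := l / n with hα
  have hα0 : 0 < α := div_pos hl hn
  have hα1 : α < 1 := (div_lt_one hn).2 hln
  have hconv := Gamma_mul_add_mul_le_rpow_Gamma_mul_rpow_Gamma hx hxn (sub_pos.2 hα1) hα0
    (sub_add_cancel 1 α)
  rw [show (1 - α) * x + α * (x + n) = x + l by rw [hα]; field_simp; ring] at hconv
  calc Gamma (x + l) ≤ Gamma x ^ (1 - α) * Gamma (x + n) ^ α := hconv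
    _ ≤ Gamma x ^ (1 - α) * (Gamma x * (x + n) ^ n) ^ α := by
        gcongr
        exact Gamma_add_nat_le_Gamma_mul_pow hx n
    _ = Gamma x * (x + n) ^ l := by
        rw [mul_rpow hΓx.le (by positivity), ← rpow_natCast, ← rpow_mul hxn.le, ← mul_assoc,
          ← rpow_add hΓx, sub_add_cancel, rpow_one, hα, mul_div_cancel₀ _ hn.ne']

theorem Gamma_mul_pow_le_Gamma_add_mul_rpow {x l : ℝ} {n : ℕ} (hx : 0 < x) (hl : 0 < l)
    (hln : l < n) : Gamma x * x ^ n ≤ Gamma (x + l) * (x + l + n) ^ ((n : ℝ) - l) := by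
  calc Gamma x * x ^ n ≤ Gamma (x + l + ((n : ℝ) - l)) := by
        rw [add_add_sub_cancel]
        exact Gamma_mul_pow_le_Gamma_add_nat hx n
    _ ≤ Gamma (x + l) * (x + l + n) ^ ((n : ℝ) - l) :=
        Gamma_add_le_Gamma_mul_rpow (by positivity) (sub_pos.2 hln) (by linarith)

theorem one_add_rpow_le_two_mul_rpow {t p : ℝ} (ht : 0 ≤ t) (hp : 0 ≤ p) :
    1 + t ^ p ≤ 2 * (1 + t) ^ p := by
  have h1 : 1 ≤ (1 + t) ^ p := one_le_rpow (by linarith) hp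
  have h2 : t ^ p ≤ (1 + t) ^ p := rpow_le_rpow ht (by linarith) hp
  linarith

theorem one_add_rpow_le_two_rpow_mul {t p : ℝ} (ht : 0 ≤ t) (hp : 0 ≤ p) :
    (1 + t) ^ p ≤ 2 ^ p * (1 + t ^ p) := by
  have htp : 0 ≤ t ^ p := rpow_nonneg ht p
  rcases le_total t 1 with h | h
  · calc (1 + t) ^ p ≤ 2 ^ p := rpow_le_rpow (by linarith) (by linarith) hp
      _ ≤ 2 ^ p * (1 + t ^ p) := le_mul_of_one_le_right (by positivity) (by linarith)
  · calc (1 + t) ^ p ≤ (2 * t) ^ p := rpow_le_rpow (by linarith) (by linarith) hp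
      _ = 2 ^ p * t ^ p := mul_rpow zero_le_two ht
      _ ≤ 2 ^ p * (1 + t ^ p) := by gcongr; linarith

theorem Gamma_add_div_Gamma_le {x l D t : ℝ} {n : ℕ} (hx : 0 < x) (hl : 0 < l) (hln : l < n)
    (hD : 1 ≤ D) (ht : 0 ≤ t) (hxt : x + n ≤ D * (1 + t)) :
    Gamma (x + l) / Gamma x ≤ 2 ^ n * D ^ n * (1 + t ^ l) := by
  have hΓx := Gamma_pos_of_pos hx
  rw [div_le_iff₀ hΓx]
  calc Gamma (x + l) ≤ Gamma x * (x + n) ^ l := Gamma_add_le_Gamma_mul_rpow hx hl hln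
    _ ≤ Gamma x * (D * (1 + t)) ^ l := by gcongr
    _ ≤ Gamma x * (D ^ l * (2 ^ l * (1 + t ^ l))) := by
        rw [mul_rpow (by linarith) (by linarith)]
        gcongr
        exact one_add_rpow_le_two_rpow_mul ht hl.le
    _ ≤ Gamma x * (D ^ n * (2 ^ n * (1 + t ^ l))) := by
        rw [← rpow_natCast D n, ← rpow_natCast 2 n]
        have := rpow_nonneg ht l
        gcongr
        exact one_le_two
    _ = 2 ^ n * D ^ n * (1 + t ^ l) * Gamma x := by ring

theorem le_Gamma_add_div_Gamma {x l δ D t : ℝ} {n : ℕ} (hx : 0 < x) (hl : 0 < l) (hln : l < n)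
    (hδ : 0 < δ) (hD : 1 ≤ D) (ht : 0 ≤ t) (hδt : δ * (1 + t) ≤ x)
    (hxt : x + l + n ≤ D * (1 + t)) :
    (δ / D) ^ n / 2 * (1 + t ^ l) ≤ Gamma (x + l) / Gamma x := by
  set u := 1 + t
  have hu : 0 < u := by positivity
  have hD0 : D ≠ 0 := by positivity
  have hΓx := Gamma_pos_of_pos hx
  have hDu : 0 < (D * u) ^ ((n : ℝ) - l) := by positivity
  rw [le_div_iff₀ hΓx, ← mul_le_mul_iff_left₀ hDu]
  calc (δ / D) ^ n / 2 * (1 + t ^ l) * Gamma x * (D * u) ^ ((n : ℝ) - l)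
      ≤ (δ / D) ^ n / 2 * (2 * u ^ l) * Gamma x * (D * u) ^ ((n : ℝ) - l) := by
        gcongr
        exact one_add_rpow_le_two_mul_rpow ht hl.le
    _ = Gamma x * (δ * u) ^ n * D ^ (-l) := by
        rw [mul_rpow (by positivity) hu.le, rpow_sub hu, rpow_sub (by positivity),
          rpow_neg (by positivity), rpow_natCast, rpow_natCast, div_pow, mul_pow]
        field_simp
    _ ≤ Gamma x * x ^ n * 1 := by
        gcongr
        exact rpow_le_one_of_one_le_of_nonpos hD (by linarith)
    _ ≤ Gamma (x + l) * (x + l + n) ^ ((n : ℝ) - l) := by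
        rw [mul_one]
        exact Gamma_mul_pow_le_Gamma_add_mul_rpow hx hl hln
    _ ≤ Gamma (x + l) * (D * u) ^ ((n : ℝ) - l) := by
        have := Gamma_pos_of_pos (hx.trans (lt_add_of_pos_right x hl))
        gcongr

end Real

theorem gamma_quotient_two_sided_bound_general
    (d : ℕ) (a b : ℝ) (ha : (d : ℝ) / 2 < a) (hb : b < d) :
    ∃ c C : ℝ, 0 < c ∧ c ≤ C ∧
      ∀ s ∈ Set.Icc a b, ∀ t : ℝ, 0 ≤ t →
        c * (1 + t ^ (2 * s - d)) ≤ Gamma (s + t) / Gamma ((d : ℝ) - s + t) ∧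
        Gamma (s + t) / Gamma ((d : ℝ) - s + t) ≤ C * (1 + t ^ (2 * s - d)) := by
  set D : ℝ := 3 * d + 1
  set δ := min ((d : ℝ) - b) 1
  have hD : 1 ≤ D := le_add_of_nonneg_left (by positivity)
  have hδ : 0 < δ := lt_min (sub_pos.2 hb) one_pos
  refine ⟨(δ / D) ^ d / 2, 2 ^ d * D ^ d, by positivity, ?_, ?_⟩
  · have hc : (δ / D) ^ d ≤ 1 :=
      pow_le_one₀ (by positivity) ((div_le_one (by positivity)).2 ((min_le_right _ _).trans hD))
    have hC : 1 ≤ 2 ^ d * D ^ d := one_le_mul_of_one_le_of_one_le (one_le_pow₀ one_le_two)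
      (one_le_pow₀ hD)
    linarith
  rintro s ⟨hsa, hsb⟩ t ht
  have hl : 0 < 2 * s - d := by linarith
  have hld : 2 * s - d < d := by linarith
  have hx : 0 < d - s + t := by linarith
  have hδt : δ * (1 + t) ≤ d - s + t := by
    nlinarith [min_le_left ((d : ℝ) - b) 1, min_le_right ((d : ℝ) - b) 1]
  have hDt : d - s + t + (2 * s - d) + d ≤ D * (1 + t) := by nlinarith
  rw [show s + t = d - s + t + (2 * s - d) by ring]
  exact ⟨le_Gamma_add_div_Gamma hx hl hld hδ hD ht hδt hDt,
    Gamma_add_div_Gamma_le hx hl hld hD ht (by linarith)⟩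

theorem gamma_quotient_two_sided_bound
    (d : ℕ) (hd : 1 ≤ d) (a b : ℝ) (ha : (d : ℝ) / 2 < a) (hab : a ≤ b) (hb : b < d) :
    ∃ c C : ℝ, 0 < c ∧ c ≤ C ∧
      ∀ s ∈ Set.Icc a b, ∀ t : ℝ, 0 ≤ t →
        c * (1 + t ^ (2 * s - d)) ≤ Gamma (s + t) / Gamma ((d : ℝ) - s + t) ∧
        Gamma (s + t) / Gamma ((d : ℝ) - s + t) ≤ C * (1 + t ^ (2 * s - d)) :=
  gamma_quotient_two_sided_bound_general d a b ha hb
end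

section
/- Let d ≥ 1 be a natural number and let s be a real number with s > d/2 and 2s ≠ d + 1. Then there exists a constant C > 0 such that for all real t ≥ 0, ∫₀^∞ min{1, e^(−t)·r} · (1 + r²)^(−s) · r^(d−1) dr ≤ C·(e^(−t) + e^((d−2s)t)). -/
open Real MeasureTheory Set

/-!
Put `ε = exp (-t) ≤ 1` and `q = 2 s - d > 0`. The weight `(1 + r²)^(-s) r^(d-1)` is at most `1`
on `(0, 1]` and at most `r^(-q-1)` beyond, and `ε^q = exp ((d - 2 s) t)`. Split `(0, ∞)` at `1`
and `ε⁻¹`: on `(0, 1]` bound `min 1 (ε r)` by `ε`, giving `ε`; on `(1, ε⁻¹]` bound it by `ε r`,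
giving `ε ∫₁^{ε⁻¹} r^(-q) ≤ (ε + ε^q) / |1 - q|`, which needs `q ≠ 1` (otherwise the piece is
`ε log ε⁻¹`); on `(ε⁻¹, ∞)` bound it by `1`, giving `∫_{ε⁻¹}^∞ r^(-q-1) = ε^q / q`.
-/

theorem setIntegral_Ioi_eq_Ioc_add_Ioc_add_Ioi {E : Type*} [NormedAddCommGroup E]
    [NormedSpace ℝ E] {μ : Measure ℝ} {f : ℝ → E} {a b c : ℝ} (hab : a ≤ b) (hbc : b ≤ c)
    (hf : IntegrableOn f (Ioi a) μ) :
    ∫ x in Ioi a, f x ∂μ = (∫ x in Ioc a b, f x ∂μ) + (∫ x in Ioc b c, f x ∂μ)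
      + ∫ x in Ioi c, f x ∂μ := by
  have hac := hab.trans hbc
  rw [← Ioc_union_Ioi_eq_Ioi hac, setIntegral_union Ioc_disjoint_Ioi_same measurableSet_Ioi
      (hf.mono_set Ioc_subset_Ioi_self) (hf.mono_set (Ioi_subset_Ioi hac)),
    ← Ioc_union_Ioc_eq_Ioc hab hbc, setIntegral_union (Ioc_disjoint_Ioc_of_le le_rfl)
      measurableSet_Ioc (hf.mono_set Ioc_subset_Ioi_self)
      (hf.mono_set (Ioc_subset_Ioi_self.trans (Ioi_subset_Ioi hab)))]

theorem integral_Ioc_one_rpow_le {a c : ℝ} (ha : a ≠ -1) (hc : 1 ≤ c) :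
    ∫ x in Ioc 1 c, x ^ a ≤ (c ^ (a + 1) + 1) * |a + 1|⁻¹ := by
  have h0 : (0 : ℝ) ∉ uIcc 1 c := by simp [uIcc_of_le hc]
  rw [← intervalIntegral.integral_of_le hc, integral_rpow (Or.inr ⟨ha, h0⟩), one_rpow]
  have hca : 0 ≤ c ^ (a + 1) := rpow_nonneg (by linarith) _
  calc (c ^ (a + 1) - 1) / (a + 1) ≤ |(c ^ (a + 1) - 1) / (a + 1)| := le_abs_self _
    _ = |c ^ (a + 1) - 1| * |a + 1|⁻¹ := by rw [abs_div, div_eq_mul_inv]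
    _ ≤ (c ^ (a + 1) + 1) * |a + 1|⁻¹ := by
      gcongr
      rw [abs_le]
      constructor <;> linarith

section MinOneMul

variable {w : ℝ → ℝ} {q ε : ℝ}

theorem setIntegral_Ioc_zero_one_min_one_mul_le (hε : 0 ≤ ε)
    (hw0 : ∀ r ∈ Ioc (0 : ℝ) 1, 0 ≤ w r) (hw1 : ∀ r ∈ Ioc (0 : ℝ) 1, w r ≤ 1) :
    ∫ r in Ioc 0 1, min 1 (ε * r) * w r ≤ ε := by
  have hbound : ∀ r ∈ Ioc (0 : ℝ) 1, ‖min 1 (ε * r) * w r‖ ≤ ε := by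
    intro r hr
    have hmin : 0 ≤ min 1 (ε * r) := le_min zero_le_one (mul_nonneg hε hr.1.le)
    rw [norm_of_nonneg (mul_nonneg hmin (hw0 r hr))]
    calc min 1 (ε * r) * w r ≤ (ε * 1) * 1 :=
          mul_le_mul ((min_le_right _ _).trans (by gcongr; exact hr.2)) (hw1 r hr) (hw0 r hr)
            (by positivity)
      _ = ε := by ring
  calc ∫ r in Ioc 0 1, min 1 (ε * r) * w r ≤ ‖∫ r in Ioc 0 1, min 1 (ε * r) * w r‖ :=
        le_norm_self _
    _ ≤ ε * volume.real (Ioc (0 : ℝ) 1) := norm_setIntegral_le_of_norm_le_const (by simp) hbound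
    _ = ε := by simp

theorem setIntegral_Ioc_one_inv_min_one_mul_le (hq1 : q ≠ 1) (hε : 0 < ε) (hε1 : ε ≤ 1)
    (hw0 : ∀ r ∈ Ioc 1 ε⁻¹, 0 ≤ w r) (hw : ∀ r ∈ Ioc 1 ε⁻¹, w r ≤ r ^ (-q - 1)) :
    ∫ r in Ioc 1 ε⁻¹, min 1 (ε * r) * w r ≤ (ε + ε ^ q) * |1 - q|⁻¹ := by
  have hone : 1 ≤ ε⁻¹ := one_le_inv₀ hε |>.2 hε1
  have hmaj : IntegrableOn (fun r => ε * r ^ (-q)) (Ioc 1 ε⁻¹) := by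
    have h := intervalIntegral.intervalIntegrable_rpow (μ := volume) (r := -q) (a := 1) (b := ε⁻¹)
      (Or.inr (by simp [uIcc_of_le hone]))
    exact ((intervalIntegrable_iff_integrableOn_Ioc_of_le hone).1 h).const_mul ε
  have hle : ∀ r ∈ Ioc 1 ε⁻¹, min 1 (ε * r) * w r ≤ ε * r ^ (-q) := by
    intro r hr
    have hr0 : 0 < r := one_pos.trans hr.1
    calc min 1 (ε * r) * w r ≤ ε * r * r ^ (-q - 1) :=
          mul_le_mul (min_le_right _ _) (hw r hr) (hw0 r hr) (by positivity)
      _ = ε * r ^ (-q) := by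
          rw [rpow_sub_one hr0.ne', mul_assoc, mul_div_cancel₀ _ hr0.ne']
  calc ∫ r in Ioc 1 ε⁻¹, min 1 (ε * r) * w r ≤ ∫ r in Ioc 1 ε⁻¹, ε * r ^ (-q) := by
        refine integral_mono_of_nonneg ?_ hmaj ((ae_restrict_mem measurableSet_Ioc).mono hle)
        filter_upwards [ae_restrict_mem measurableSet_Ioc] with r hr
        exact mul_nonneg (le_min zero_le_one (mul_nonneg hε.le (zero_le_one.trans hr.1.le))) (hw0 r hr)
    _ = ε * ∫ r in Ioc 1 ε⁻¹, r ^ (-q) := integral_const_mul _ _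
    _ ≤ ε * ((ε⁻¹ ^ (-q + 1) + 1) * |-q + 1|⁻¹) := by
        gcongr
        exact integral_Ioc_one_rpow_le (by simpa [neg_add_eq_zero] using hq1) hone
    _ = (ε + ε ^ q) * |1 - q|⁻¹ := by
        rw [inv_rpow hε.le, ← rpow_neg hε.le, show -(-q + 1) = q - 1 by ring,
          show -q + 1 = 1 - q by ring, rpow_sub_one hε.ne']
        field_simp
        ring

theorem setIntegral_Ioi_inv_min_one_mul_le (hq : 0 < q) (hε : 0 < ε)
    (hw0 : ∀ r ∈ Ioi ε⁻¹, 0 ≤ w r) (hw : ∀ r ∈ Ioi ε⁻¹, w r ≤ r ^ (-q - 1)) :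
    ∫ r in Ioi ε⁻¹, min 1 (ε * r) * w r ≤ ε ^ q * q⁻¹ := by
  have hmaj : IntegrableOn (fun r : ℝ => r ^ (-q - 1)) (Ioi ε⁻¹) :=
    integrableOn_Ioi_rpow_of_lt (by linarith) (inv_pos.2 hε)
  calc ∫ r in Ioi ε⁻¹, min 1 (ε * r) * w r ≤ ∫ r in Ioi ε⁻¹, r ^ (-q - 1) := by
        refine integral_mono_of_nonneg ?_ hmaj ?_
        · filter_upwards [ae_restrict_mem measurableSet_Ioi] with r hr
          have hr0 : 0 ≤ r := ((inv_pos.2 hε).trans hr).le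
          exact mul_nonneg (le_min zero_le_one (by positivity)) (hw0 r hr)
        · filter_upwards [ae_restrict_mem measurableSet_Ioi] with r hr
          exact (mul_le_of_le_one_left (hw0 r hr) (min_le_left _ _)).trans (hw r hr)
    _ = ε ^ q * q⁻¹ := by
        rw [integral_Ioi_rpow_of_lt (by linarith) (inv_pos.2 hε), inv_rpow hε.le, ← rpow_neg hε.le,
          show -q - 1 + 1 = -q by ring, neg_neg, neg_div_neg_eq, div_eq_mul_inv]

theorem integrableOn_Ioi_zero_of_le_one_of_le_rpow (hq : 0 < q) (hw : Measurable w)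
    (hw0 : ∀ r ∈ Ioi 0, 0 ≤ w r) (hw_le_one : ∀ r ∈ Ioc 0 1, w r ≤ 1)
    (hw_le_rpow : ∀ r ∈ Ioi 1, w r ≤ r ^ (-q - 1)) : IntegrableOn w (Ioi 0) := by
  rw [← Ioc_union_Ioi_eq_Ioi zero_le_one]
  refine IntegrableOn.union ?_ ?_
  · refine (integrableOn_const (C := (1 : ℝ)) (by simp)).mono' hw.aestronglyMeasurable ?_
    filter_upwards [ae_restrict_mem measurableSet_Ioc] with r hr
    rw [norm_of_nonneg (hw0 r hr.1)]
    exact hw_le_one r hr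
  · refine (integrableOn_Ioi_rpow_of_lt (a := -q - 1) (by linarith) one_pos).mono'
      hw.aestronglyMeasurable ?_
    filter_upwards [ae_restrict_mem measurableSet_Ioi] with r hr
    rw [norm_of_nonneg (hw0 r (mem_Ioi.2 (one_pos.trans hr)))]
    exact hw_le_rpow r hr

theorem integral_Ioi_min_one_mul_le (hq : 0 < q) (hq1 : q ≠ 1) (hε : 0 < ε) (hε1 : ε ≤ 1)
    (hw : Measurable w) (hw0 : ∀ r ∈ Ioi 0, 0 ≤ w r) (hw_le_one : ∀ r ∈ Ioc 0 1, w r ≤ 1)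
    (hw_le_rpow : ∀ r ∈ Ioi 1, w r ≤ r ^ (-q - 1)) :
    ∫ r in Ioi 0, min 1 (ε * r) * w r ≤ (1 + |1 - q|⁻¹ + q⁻¹) * (ε + ε ^ q) := by
  have hone : 1 ≤ ε⁻¹ := one_le_inv₀ hε |>.2 hε1
  have hw_int := integrableOn_Ioi_zero_of_le_one_of_le_rpow hq hw hw0 hw_le_one hw_le_rpow
  have hint : IntegrableOn (fun r => min 1 (ε * r) * w r) (Ioi 0) := by
    refine hw_int.mono' (by fun_prop) ?_
    filter_upwards [ae_restrict_mem measurableSet_Ioi] with r hr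
    have hmin : 0 ≤ min 1 (ε * r) := le_min zero_le_one (mul_nonneg hε.le (le_of_lt hr))
    rw [norm_of_nonneg (mul_nonneg hmin (hw0 r hr))]
    exact mul_le_of_le_one_left (hw0 r hr) (min_le_left _ _)
  have h₁ := setIntegral_Ioc_zero_one_min_one_mul_le hε.le (fun r hr => hw0 r hr.1) hw_le_one
  have h₂ := setIntegral_Ioc_one_inv_min_one_mul_le hq1 hε hε1
    (fun r hr => hw0 r (one_pos.trans hr.1)) (fun r hr => hw_le_rpow r hr.1)
  have h₃ := setIntegral_Ioi_inv_min_one_mul_le hq hε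
    (fun r hr => hw0 r ((inv_pos.2 hε).trans hr)) (fun r hr => hw_le_rpow r (hone.trans_lt hr))
  rw [setIntegral_Ioi_eq_Ioc_add_Ioc_add_Ioi zero_le_one hone hint]
  have : 0 ≤ ε ^ q := rpow_nonneg hε.le q
  have : 0 ≤ ε * q⁻¹ := by positivity
  nlinarith

end MinOneMul

theorem one_add_sq_rpow_neg_mul_pow_le_one {s r : ℝ} (n : ℕ) (hs : 0 ≤ s) (hr0 : 0 ≤ r)
    (hr1 : r ≤ 1) : (1 + r ^ 2) ^ (-s) * r ^ n ≤ 1 :=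
  mul_le_one₀ (rpow_le_one_of_one_le_of_nonpos (by nlinarith) (by linarith))
    (pow_nonneg hr0 n) (pow_le_one₀ hr0 hr1)

theorem one_add_sq_rpow_neg_mul_pow_le_rpow {s r : ℝ} (n : ℕ) (hs : 0 ≤ s) (hr : 0 < r) :
    (1 + r ^ 2) ^ (-s) * r ^ n ≤ r ^ ((n : ℝ) - 2 * s) :=
  calc (1 + r ^ 2) ^ (-s) * r ^ n ≤ (r ^ 2) ^ (-s) * r ^ n :=
        mul_le_mul_of_nonneg_right
          (rpow_le_rpow_of_nonpos (by positivity) (by linarith) (by linarith)) (by positivity)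
    _ = r ^ ((n : ℝ) - 2 * s) := by
        rw [← rpow_natCast, ← rpow_natCast r n, ← rpow_mul hr.le, sub_eq_neg_add,
          rpow_add hr]
        push_cast
        ring_nf

theorem error_integral_bound
    (d : ℕ) (hd : 1 ≤ d) (s : ℝ) (hs : (d : ℝ) / 2 < s) (hs' : 2 * s ≠ (d : ℝ) + 1) :
    ∃ C : ℝ, 0 < C ∧ ∀ t : ℝ, 0 ≤ t →
      (∫ r in Set.Ioi (0 : ℝ),
        min 1 (Real.exp (-t) * r) * (1 + r ^ 2) ^ (-s) * r ^ (d - 1))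
        ≤ C * (Real.exp (-t) + Real.exp (((d : ℝ) - 2 * s) * t)) := by
  set q := 2 * s - d
  have hq : 0 < q := by linarith
  have hq1 : q ≠ 1 := fun h => hs' (by linarith)
  have hs0 : 0 ≤ s := by linarith [(Nat.cast_nonneg d : (0 : ℝ) ≤ d)]
  refine ⟨1 + |1 - q|⁻¹ + q⁻¹, by positivity, fun t ht => ?_⟩
  have hw_le_rpow : ∀ r ∈ Ioi (1 : ℝ), (1 + r ^ 2) ^ (-s) * r ^ (d - 1) ≤ r ^ (-q - 1) := by
    intro r hr
    convert one_add_sq_rpow_neg_mul_pow_le_rpow (d - 1) hs0 (one_pos.trans hr) using 2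
    push_cast [hd]
    ring
  have key := integral_Ioi_min_one_mul_le hq hq1 (exp_pos (-t))
    (exp_le_one_iff.2 (neg_nonpos.2 ht)) (by fun_prop)
    (fun r hr => mul_nonneg (rpow_nonneg (by positivity) _) (pow_nonneg (le_of_lt hr) _))
    (fun r hr => one_add_sq_rpow_neg_mul_pow_le_one _ hs0 hr.1.le hr.2) hw_le_rpow
  rw [← exp_mul, show -t * q = (d - 2 * s) * t by ring] at key
  simpa only [mul_assoc] using key
end

section
/- Let d ≥ 3 be a natural number and let a, b be real numbers with d/2 < a ≤ b < d − 1. Then there exists a constant C > 0 such that for every s ∈ [a, b] and all natural numbers t₁, t₂, t₃, t₄, one has (Γ(d−s+t₃)/Γ(s+t₃)) · (Γ(d−s+t₄−1)/Γ(s+t₄−1)) · (Γ(s+t₁)/Γ(d−s+t₁)) · (Γ(s+t₂−1)/Γ(d−s+t₂−1)) ≤ C·(1 + t₁^(2s−d))·(1 + t₂^(2s−d))·(1 + t₃^(2s−d))·(1 + t₄^(2s−d)). -/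
open Real

/-!
With `δ = 2s - d ∈ (0, 2b - d]`, each of the four quotients is `Γ x / Γ (x + δ)` or its inverse
with `x ≥ d - 1 - b > 0`. Log-convexity of `Γ` gives `Γ (x + δ) / Γ x ≤ (x + δ) ^ δ`, which grows
like `t ^ δ` in the shift `t`; monotonicity of `Γ` on `[2, ∞)` after shifting by two bounds
`Γ x / Γ (x + δ)` by `(1 + δ / x) ^ 2`, uniformly in `x ≥ d - 1 - b`.
-/

namespace Real

lemma add_rpow_le_two_rpow_mul_rpow_add_rpow {a b p : ℝ} (ha : 0 ≤ a) (hb : 0 ≤ b) (hp : 0 ≤ p) :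
    (a + b) ^ p ≤ 2 ^ p * (a ^ p + b ^ p) := calc
  (a + b) ^ p ≤ (2 * max a b) ^ p := by
    gcongr
    rw [two_mul]; gcongr <;> simp
  _ = 2 ^ p * max a b ^ p := mul_rpow zero_le_two (le_max_of_le_left ha)
  _ ≤ 2 ^ p * (a ^ p + b ^ p) := by
    gcongr
    rcases max_choice a b with h | h <;> rw [h]
    · linarith [rpow_nonneg hb p]
    · linarith [rpow_nonneg ha p]

/-- The slope of the convex function `log ∘ Γ` on `[x, x + δ]` is at most its slope
`log (x + δ)` on `[x + δ, x + δ + 1]`. -/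
lemma Gamma_add_div_Gamma_le_rpow {x δ : ℝ} (hx : 0 < x) (hδ : 0 ≤ δ) :
    Gamma (x + δ) / Gamma x ≤ (x + δ) ^ δ := by
  rcases hδ.eq_or_lt with rfl | hδ
  · simp [(Gamma_pos_of_pos hx).ne']
  have hxδ : 0 < x + δ := by linarith
  have hslope := convexOn_log_Gamma.slope_mono_adjacent (Set.mem_Ioi.2 hx)
    (Set.mem_Ioi.2 (by linarith : 0 < x + δ + 1)) (lt_add_of_pos_right x hδ) (lt_add_one (x + δ))
  simp only [Function.comp_apply, Gamma_add_one hxδ.ne',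
    log_mul hxδ.ne' (Gamma_pos_of_pos hxδ).ne', add_sub_cancel_left, div_one] at hslope
  rw [div_le_iff₀ hδ] at hslope
  rw [← log_le_log_iff (div_pos (Gamma_pos_of_pos hxδ) (Gamma_pos_of_pos hx))
    (rpow_pos_of_pos hxδ δ), log_div (Gamma_pos_of_pos hxδ).ne' (Gamma_pos_of_pos hx).ne',
    log_rpow hxδ]
  linarith

lemma Gamma_add_two {x : ℝ} (hx : 0 < x) : Gamma (x + 2) = x * (x + 1) * Gamma x := by
  rw [show x + 2 = x + 1 + 1 by ring, Gamma_add_one (by linarith), Gamma_add_one hx.ne']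
  ring

lemma Gamma_div_Gamma_add_le {x δ : ℝ} (hx : 0 < x) (hδ : 0 ≤ δ) :
    Gamma x / Gamma (x + δ) ≤ (1 + δ / x) ^ 2 := by
  have hxδ : 0 < x + δ := by linarith
  have hpoly : (x + δ) * (x + δ + 1) ≤ x * (x + 1) * (1 + δ / x) ^ 2 := by
    field_simp
    nlinarith
  rw [div_le_iff₀ (Gamma_pos_of_pos hxδ)]
  refine le_of_mul_le_mul_left ?_ (by positivity : 0 < x * (x + 1))
  calc x * (x + 1) * Gamma x = Gamma (x + 2) := (Gamma_add_two hx).symm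
    _ ≤ Gamma (x + δ + 2) :=
      Gamma_strictMonoOn_Ici.monotoneOn (by simp; linarith) (by simp; linarith) (by linarith)
    _ = (x + δ) * (x + δ + 1) * Gamma (x + δ) := Gamma_add_two hxδ
    _ ≤ x * (x + 1) * ((1 + δ / x) ^ 2 * Gamma (x + δ)) := by
      rw [← mul_assoc]
      exact mul_le_mul_of_nonneg_right hpoly (Gamma_pos_of_pos hxδ).le

lemma Gamma_div_Gamma_add_le_of_le {x₀ x δ B : ℝ} (hx₀ : 0 < x₀) (hx : x₀ ≤ x) (hδ : 0 ≤ δ)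
    (hδB : δ ≤ B) : Gamma x / Gamma (x + δ) ≤ (1 + B / x₀) ^ 2 := by
  refine (Gamma_div_Gamma_add_le (hx₀.trans_le hx) hδ).trans ?_
  have : 0 ≤ δ / x := div_nonneg hδ (hx₀.le.trans hx)
  gcongr
  linarith

lemma Gamma_add_div_Gamma_le_mul_one_add_rpow {x δ B c t : ℝ} (hx : 0 < x) (hδ : 0 ≤ δ)
    (hδB : δ ≤ B) (hc : 1 ≤ c) (ht : 0 ≤ t) (hxδ : x + δ ≤ c + t) :
    Gamma (x + δ) / Gamma x ≤ (2 * c) ^ B * (1 + t ^ δ) := calc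
  Gamma (x + δ) / Gamma x ≤ (x + δ) ^ δ := Gamma_add_div_Gamma_le_rpow hx hδ
  _ ≤ (c + t) ^ δ := by gcongr
  _ ≤ 2 ^ δ * (c ^ δ + t ^ δ) := add_rpow_le_two_rpow_mul_rpow_add_rpow (by linarith) ht hδ
  _ ≤ 2 ^ δ * (c ^ δ * (1 + t ^ δ)) := by
    gcongr
    nlinarith [one_le_rpow hc hδ, rpow_nonneg ht δ]
  _ = (2 * c) ^ δ * (1 + t ^ δ) := by rw [mul_rpow zero_le_two (by linarith)]; ring
  _ ≤ (2 * c) ^ B * (1 + t ^ δ) := by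
    gcongr
    linarith

end Real

theorem gamma_quotient_product_bound_general
    (d : ℕ) (a b : ℝ) (ha : (d : ℝ) / 2 < a) (hab : a ≤ b)
    (hb : b < (d : ℝ) - 1) :
    ∃ C : ℝ, 0 < C ∧ ∀ s ∈ Set.Icc a b, ∀ t₁ t₂ t₃ t₄ : ℕ,
      (Gamma ((d : ℝ) - s + t₃) / Gamma (s + t₃)) *
        (Gamma ((d : ℝ) - s + t₄ - 1) / Gamma (s + t₄ - 1)) *
        (Gamma (s + t₁) / Gamma ((d : ℝ) - s + t₁)) *
        (Gamma (s + t₂ - 1) / Gamma ((d : ℝ) - s + t₂ - 1)) ≤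
      C * ((1 + (t₁ : ℝ) ^ (2 * s - d)) * (1 + (t₂ : ℝ) ^ (2 * s - d)) *
        (1 + (t₃ : ℝ) ^ (2 * s - d)) * (1 + (t₄ : ℝ) ^ (2 * s - d))) := by
  have hx₀ : 0 < (d : ℝ) - 1 - b := by linarith
  set K := (1 + (2 * b - d) / ((d : ℝ) - 1 - b)) ^ 2
  set L := (2 * b) ^ (2 * b - d)
  have hK : 0 < K := pow_pos (by linarith [div_nonneg (by linarith : 0 ≤ 2 * b - d) hx₀.le]) 2
  have hL : 0 < L := rpow_pos_of_pos (by linarith) _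
  refine ⟨K ^ 2 * L ^ 2, by positivity, fun s ⟨has, hsb⟩ t₁ t₂ t₃ t₄ => ?_⟩
  have hδ : 0 ≤ 2 * s - d := by linarith
  have ht (t : ℕ) : (0 : ℝ) ≤ t := t.cast_nonneg
  have lower (x y : ℝ) (hx : (d : ℝ) - 1 - b ≤ x) (hy : y = x + (2 * s - d)) :
      Gamma x / Gamma y ≤ K :=
    hy ▸ Gamma_div_Gamma_add_le_of_le hx₀ hx hδ (by linarith)
  have upper (x y t : ℝ) (hx : (d : ℝ) - 1 - b ≤ x) (ht : 0 ≤ t) (hyt : y ≤ b + t)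
      (hy : y = x + (2 * s - d)) : Gamma y / Gamma x ≤ L * (1 + t ^ (2 * s - d)) :=
    hy ▸ Gamma_add_div_Gamma_le_mul_one_add_rpow (by linarith) hδ (by linarith) (by linarith)
      ht (hy ▸ hyt)
  have hΓ (x y : ℝ) (hx : 0 ≤ x) (hy : 0 ≤ y) : 0 ≤ Gamma x / Gamma y :=
    div_nonneg (Gamma_nonneg_of_nonneg hx) (Gamma_nonneg_of_nonneg hy)
  calc _ ≤ K * K * (L * (1 + (t₁ : ℝ) ^ (2 * s - d))) * (L * (1 + (t₂ : ℝ) ^ (2 * s - d))) := by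
        gcongr
        · exact hΓ _ _ (by linarith [ht t₂]) (by linarith [ht t₂])
        · exact hΓ _ _ (by linarith [ht t₁]) (by linarith [ht t₁])
        · exact hΓ _ _ (by linarith [ht t₄]) (by linarith [ht t₄])
        · exact lower _ _ (by linarith [ht t₃]) (by ring)
        · exact lower _ _ (by linarith [ht t₄]) (by ring)
        · exact upper _ _ _ (by linarith [ht t₁]) (ht t₁) (by linarith) (by ring)
        · exact upper _ _ _ (by linarith [ht t₂]) (ht t₂) (by linarith) (by ring)
    _ = K ^ 2 * L ^ 2 * ((1 + (t₁ : ℝ) ^ (2 * s - d)) * (1 + (t₂ : ℝ) ^ (2 * s - d)) * 1 * 1) := by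
        ring
    _ ≤ _ := by gcongr <;> exact le_add_of_nonneg_right (rpow_nonneg (ht _) _)

theorem gamma_quotient_product_bound
    (d : ℕ) (hd : 3 ≤ d) (a b : ℝ) (ha : (d : ℝ) / 2 < a) (hab : a ≤ b)
    (hb : b < (d : ℝ) - 1) :
    ∃ C : ℝ, 0 < C ∧ ∀ s ∈ Set.Icc a b, ∀ t₁ t₂ t₃ t₄ : ℕ,
      (Gamma ((d : ℝ) - s + t₃) / Gamma (s + t₃)) *
        (Gamma ((d : ℝ) - s + t₄ - 1) / Gamma (s + t₄ - 1)) *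
        (Gamma (s + t₁) / Gamma ((d : ℝ) - s + t₁)) *
        (Gamma (s + t₂ - 1) / Gamma ((d : ℝ) - s + t₂ - 1)) ≤
      C * ((1 + (t₁ : ℝ) ^ (2 * s - d)) * (1 + (t₂ : ℝ) ^ (2 * s - d)) *
        (1 + (t₃ : ℝ) ^ (2 * s - d)) * (1 + (t₄ : ℝ) ^ (2 * s - d))) :=
  gamma_quotient_product_bound_general d a b ha hab hb
end

section
/- Let a, b be real numbers with 1/2 < a ≤ b < 1. Then there exist constants 0 < c ≤ C such that for every s ∈ [a, b] and every integer t ∈ ℤ, c·(1 + |t|^(2s−1)) ≤ Γ(s + t)/Γ(1 − s + t) ≤ C·(1 + |t|^(2s−1)). -/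
/-!
Log-convexity of `Γ` yields Wendel's inequalities `Γ(x + θ) ≤ x ^ θ Γ(x)` and
`x Γ(x) ≤ (x + θ) ^ (1 - θ) Γ(x + θ)` for `x > 0`, `0 < θ < 1`. Combining them with `θ = s` and
`θ = 1 - s` squeezes `Γ(s + x) / Γ(1 - s + x)` between `x ^ (2s - 1) / 2` and `2 x ^ (2s - 1)`
once `x ≥ 1`. The reflection formula makes the quotient an even function of the integer `t`,
and at `t = 0` the quotient `Γ(s) / Γ(1 - s)` is continuous and positive in `s`, hence bounded
above and away from zero on the compact interval `[a, b]`.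
-/

open Real

theorem Gamma_add_le_Gamma_mul_rpow {x θ : ℝ} (hx : 0 < x) (hθ₀ : 0 < θ) (hθ₁ : θ < 1) :
    Gamma (x + θ) ≤ Gamma x * x ^ θ := by
  have hΓ := Gamma_pos_of_pos hx
  have h := Gamma_mul_add_mul_le_rpow_Gamma_mul_rpow_Gamma hx (by linarith : 0 < x + 1)
    (by linarith : 0 < 1 - θ) hθ₀ (by ring)
  rw [show (1 - θ) * x + θ * (x + 1) = x + θ by ring, Gamma_add_one hx.ne',
    mul_rpow hx.le hΓ.le] at h
  calc Gamma (x + θ) ≤ Gamma x ^ (1 - θ) * (x ^ θ * Gamma x ^ θ) := h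
    _ = Gamma x ^ (1 - θ + θ) * x ^ θ := by rw [rpow_add hΓ]; ring
    _ = Gamma x * x ^ θ := by rw [sub_add_cancel, rpow_one]

theorem mul_Gamma_le_Gamma_add_mul_rpow {x θ : ℝ} (hx : 0 < x) (hθ₀ : 0 < θ) (hθ₁ : θ < 1) :
    x * Gamma x ≤ Gamma (x + θ) * (x + θ) ^ (1 - θ) := by
  have hxθ : 0 < x + θ := by linarith
  have hΓ := Gamma_pos_of_pos hxθ
  have h := Gamma_mul_add_mul_le_rpow_Gamma_mul_rpow_Gamma hxθ (by linarith : 0 < x + θ + 1)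
    hθ₀ (by linarith : 0 < 1 - θ) (by ring)
  rw [show θ * (x + θ) + (1 - θ) * (x + θ + 1) = x + 1 by ring, Gamma_add_one hx.ne',
    Gamma_add_one hxθ.ne', mul_rpow hxθ.le hΓ.le] at h
  calc x * Gamma x ≤ Gamma (x + θ) ^ θ * ((x + θ) ^ (1 - θ) * Gamma (x + θ) ^ (1 - θ)) := h
    _ = Gamma (x + θ) ^ (θ + (1 - θ)) * (x + θ) ^ (1 - θ) := by rw [rpow_add hΓ]; ring
    _ = Gamma (x + θ) * (x + θ) ^ (1 - θ) := by rw [add_sub_cancel, rpow_one]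

theorem rpow_le_two_mul_rpow {x y e : ℝ} (hy : 0 ≤ y) (hyx : y ≤ 2 * x) (he₀ : 0 ≤ e)
    (he₁ : e ≤ 1) : y ^ e ≤ 2 * x ^ e := by
  have hx : 0 ≤ x := by linarith
  calc y ^ e ≤ (2 * x) ^ e := rpow_le_rpow hy hyx he₀
    _ = 2 ^ e * x ^ e := mul_rpow zero_le_two hx
    _ ≤ 2 ^ (1 : ℝ) * x ^ e := by gcongr; exact one_le_two
    _ = 2 * x ^ e := by rw [rpow_one]

noncomputable def gammaQuotient (s x : ℝ) : ℝ := Gamma (s + x) / Gamma (1 - s + x)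

theorem gammaQuotient_le_rpow_mul_rpow {s x : ℝ} (hs₀ : 0 < s) (hs₁ : s < 1) (hx : 0 < x) :
    gammaQuotient s x ≤ x ^ (s - 1) * (1 - s + x) ^ s := by
  have hΓ : 0 < Gamma (1 - s + x) := Gamma_pos_of_pos (by linarith)
  rw [gammaQuotient, div_le_iff₀ hΓ, add_comm s, add_comm (1 - s)]
  calc Gamma (x + s) ≤ Gamma x * x ^ s := Gamma_add_le_Gamma_mul_rpow hx hs₀ hs₁
    _ = x ^ (s - 1) * (x * Gamma x) := by rw [rpow_sub_one hx.ne']; field_simp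
    _ ≤ x ^ (s - 1) * (Gamma (x + (1 - s)) * (x + (1 - s)) ^ (1 - (1 - s))) := by
      have := mul_Gamma_le_Gamma_add_mul_rpow hx (by linarith : 0 < 1 - s) (by linarith)
      gcongr
    _ = x ^ (s - 1) * (x + (1 - s)) ^ s * Gamma (x + (1 - s)) := by rw [sub_sub_cancel]; ring

theorem rpow_div_rpow_le_gammaQuotient {s x : ℝ} (hs₀ : 0 < s) (hs₁ : s < 1) (hx : 0 < x) :
    x ^ s / (s + x) ^ (1 - s) ≤ gammaQuotient s x := by
  have hΓ : 0 < Gamma (1 - s + x) := Gamma_pos_of_pos (by linarith)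
  have hsx : 0 < (s + x) ^ (1 - s) := rpow_pos_of_pos (by linarith) _
  rw [gammaQuotient, div_le_div_iff₀ hsx hΓ, add_comm s, add_comm (1 - s)]
  calc x ^ s * Gamma (x + (1 - s)) ≤ x ^ s * (Gamma x * x ^ (1 - s)) := by
        gcongr; exact Gamma_add_le_Gamma_mul_rpow hx (by linarith) (by linarith)
    _ = x * Gamma x := by rw [mul_left_comm, ← rpow_add hx, add_sub_cancel, rpow_one, mul_comm]
    _ ≤ Gamma (x + s) * (x + s) ^ (1 - s) := mul_Gamma_le_Gamma_add_mul_rpow hx hs₀ hs₁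

theorem gammaQuotient_le_two_mul_rpow {s x : ℝ} (hs₀ : 0 < s) (hs₁ : s < 1) (hx : 1 ≤ x) :
    gammaQuotient s x ≤ 2 * x ^ (2 * s - 1) := by
  have hx₀ : 0 < x := by linarith
  calc gammaQuotient s x ≤ x ^ (s - 1) * (1 - s + x) ^ s :=
        gammaQuotient_le_rpow_mul_rpow hs₀ hs₁ hx₀
    _ ≤ x ^ (s - 1) * (2 * x ^ s) := by
        gcongr; exact rpow_le_two_mul_rpow (by linarith) (by linarith) hs₀.le hs₁.le
    _ = 2 * x ^ (2 * s - 1) := by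
        rw [mul_left_comm, ← rpow_add hx₀]; ring_nf

theorem rpow_div_two_le_gammaQuotient {s x : ℝ} (hs₀ : 0 < s) (hs₁ : s < 1) (hx : 1 ≤ x) :
    x ^ (2 * s - 1) / 2 ≤ gammaQuotient s x := by
  have hx₀ : 0 < x := by linarith
  calc x ^ (2 * s - 1) / 2 = x ^ s / (2 * x ^ (1 - s)) := by
        rw [eq_div_iff (by positivity), div_mul_eq_mul_div, mul_left_comm, ← rpow_add hx₀]
        ring_nf
    _ ≤ x ^ s / (s + x) ^ (1 - s) := by
        gcongr
        exact rpow_le_two_mul_rpow (by linarith) (by linarith) (by linarith) (by linarith)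
    _ ≤ gammaQuotient s x := rpow_div_rpow_le_gammaQuotient hs₀ hs₁ hx₀

theorem gammaQuotient_pos {s x : ℝ} (hs₀ : 0 < s) (hs₁ : s < 1) (hx : 0 ≤ x) :
    0 < gammaQuotient s x :=
  div_pos (Gamma_pos_of_pos (by linarith)) (Gamma_pos_of_pos (by linarith))

theorem continuousOn_gammaQuotient_zero :
    ContinuousOn (fun s => gammaQuotient s 0) (Set.Ioo 0 1) := by
  have hΓ {y : ℝ} (hy : 0 < y) : ContinuousAt Gamma y :=
    (differentiableAt_Gamma fun m => by linarith [m.cast_nonneg (α := ℝ)]).continuousAt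
  intro s ⟨hs₀, hs₁⟩
  have h1s : 0 < 1 - s := by linarith
  simp only [gammaQuotient, add_zero]
  exact ((hΓ hs₀).div ((hΓ h1s).comp (continuous_sub_left 1).continuousAt)
    (Gamma_pos_of_pos h1s).ne').continuousWithinAt

theorem Gamma_sub_mul_Gamma_one_sub_add (s : ℝ) (t : ℤ) :
    Gamma (s - t) * Gamma (1 - s + t) = Gamma (s + t) * Gamma (1 - s - t) := by
  have h₁ := Gamma_mul_Gamma_one_sub (s - t)
  have h₂ := Gamma_mul_Gamma_one_sub (s + t)
  rw [show 1 - (s - t) = 1 - s + t by ring] at h₁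
  rw [← sub_sub] at h₂
  rw [h₁, h₂, mul_sub, mul_add, mul_comm π (t : ℝ), sin_sub_int_mul_pi, sin_add_int_mul_pi]

theorem Gamma_one_sub_add_intCast_ne_zero {s : ℝ} (hs : ∀ m : ℤ, s ≠ m) (t : ℤ) :
    Gamma (1 - s + t) ≠ 0 :=
  Gamma_ne_zero fun m h => hs (1 + t + m) (by push_cast; linarith)

theorem gammaQuotient_neg_intCast {s : ℝ} (hs : ∀ m : ℤ, s ≠ m) (t : ℤ) :
    gammaQuotient s (-t) = gammaQuotient s t := by
  have h := Gamma_one_sub_add_intCast_ne_zero hs (-t)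
  push_cast at h
  rw [gammaQuotient, gammaQuotient, div_eq_div_iff h (Gamma_one_sub_add_intCast_ne_zero hs t),
    ← sub_eq_add_neg, ← sub_eq_add_neg, Gamma_sub_mul_Gamma_one_sub_add]

theorem gammaQuotient_abs_intCast {s : ℝ} (hs : ∀ m : ℤ, s ≠ m) (t : ℤ) :
    gammaQuotient s |(t : ℝ)| = gammaQuotient s t := by
  rcases abs_choice (t : ℝ) with h | h <;> rw [h]
  exact gammaQuotient_neg_intCast hs t

theorem gamma_quotient_two_sided_bound_d1_general
    (a b : ℝ) (ha : 1 / 2 < a) (hb : b < 1) :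
    ∃ c C : ℝ, 0 < c ∧ c ≤ C ∧
      ∀ s ∈ Set.Icc a b, ∀ t : ℤ,
        c * (1 + |(t : ℝ)| ^ (2 * s - 1)) ≤ Gamma (s + t) / Gamma (1 - s + t) ∧
        Gamma (s + t) / Gamma (1 - s + t) ≤ C * (1 + |(t : ℝ)| ^ (2 * s - 1)) := by
  have hK : Set.Icc a b ⊆ Set.Ioo 0 1 := fun s hs => ⟨by linarith [hs.1], by linarith [hs.2]⟩
  have hcont := continuousOn_gammaQuotient_zero.mono hK
  obtain ⟨m, hm, hm_le⟩ := isCompact_Icc.exists_forall_le' hcont fun s hs =>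
    gammaQuotient_pos (hK hs).1 (hK hs).2 le_rfl
  obtain ⟨M, hM⟩ := isCompact_Icc.bddAbove_image hcont
  refine ⟨min (1 / 4) m, max 2 M, lt_min (by norm_num) hm,
    (min_le_left _ _).trans <| (by norm_num : (1 / 4 : ℝ) ≤ 2).trans (le_max_left _ _),
    fun s hs t => ?_⟩
  obtain ⟨hs₀, hs₁⟩ := hK hs
  have hs_int : ∀ n : ℤ, s ≠ n := fun n hn => by
    have : (0 : ℤ) < n := by exact_mod_cast hn ▸ hs₀
    have : n < 1 := by exact_mod_cast hn ▸ hs₁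
    omega
  change _ ≤ gammaQuotient s t ∧ gammaQuotient s t ≤ _
  rw [← gammaQuotient_abs_intCast hs_int]
  rcases eq_or_ne t 0 with rfl | ht
  · simp only [Int.cast_zero, abs_zero, zero_rpow (by linarith [hs.1] : 2 * s - 1 ≠ 0), add_zero,
      mul_one]
    exact ⟨(min_le_right _ _).trans (hm_le s hs), (hM ⟨s, hs, rfl⟩).trans (le_max_right _ _)⟩
  · have hx : 1 ≤ |(t : ℝ)| := by exact_mod_cast Int.one_le_abs ht
    have hp : 1 ≤ |(t : ℝ)| ^ (2 * s - 1) := one_le_rpow hx (by linarith [hs.1])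
    have := gammaQuotient_le_two_mul_rpow hs₀ hs₁ hx
    have := rpow_div_two_le_gammaQuotient hs₀ hs₁ hx
    constructor <;> nlinarith [min_le_left (1 / 4) m, le_max_left 2 M]

theorem gamma_quotient_two_sided_bound_d1
    (a b : ℝ) (ha : 1 / 2 < a) (hab : a ≤ b) (hb : b < 1) :
    ∃ c C : ℝ, 0 < c ∧ c ≤ C ∧
      ∀ s ∈ Set.Icc a b, ∀ t : ℤ,
        c * (1 + |(t : ℝ)| ^ (2 * s - 1)) ≤ Gamma (s + t) / Gamma (1 - s + t) ∧
        Gamma (s + t) / Gamma (1 - s + t) ≤ C * (1 + |(t : ℝ)| ^ (2 * s - 1)) :=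
  gamma_quotient_two_sided_bound_d1_general a b ha hb
end
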